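/- arXiv:1506.07346 — 4 statements merged into one kernel-verified Lean document; each statement's English description precedes it below -/
import Mathlib

section
/- Let N be a solid quasi-norm functional on measurable functions on X, and let f, f_n : X → ℂ (n ∈ ℕ) be measurable functions with N(f_n − f) → 0 as n → ∞. Then for μ-a.e. x ∈ X there exists a strictly increasing sequence of indices (n_k) (which may depend on x) such that f_{n_k}(x) → f(x) as k → ∞. -/
/-!
Put `Tₘ(x) = infₙ ‖Fₙ₊ₘ(x) - f(x)‖`. For `n ≥ m` we have `Tₘ ≤ ‖Fₙ - f‖` pointwise, so solidity
gives `N(Tₘ) ≤ N(Fₙ - f) → 0`, hence `N(Tₘ) = 0` and `Tₘ = 0` a.e. Off a countable union of null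
sets every tail infimum vanishes, i.e. `f(x)` is a cluster point of `Fₙ(x)`, and a subsequence
converges to it.
-/

open MeasureTheory Filter Topology
open scoped ENNReal

noncomputable section

section TailInfNorm

variable {E : Type*} [SeminormedAddCommGroup E]

def tailInfNorm (u : ℕ → E) (m : ℕ) : ℝ := ⨅ n, ‖u (n + m)‖

theorem tailInfNorm_nonneg (u : ℕ → E) (m : ℕ) : 0 ≤ tailInfNorm u m :=
  le_ciInf fun _ => norm_nonneg _

theorem tailInfNorm_le_norm {u : ℕ → E} {m n : ℕ} (hmn : m ≤ n) : tailInfNorm u m ≤ ‖u n‖ := by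
  obtain ⟨k, rfl⟩ := Nat.exists_eq_add_of_le' hmn
  exact ciInf_le ⟨0, Set.forall_mem_range.2 fun _ => norm_nonneg _⟩ k

theorem mapClusterPt_zero_of_tailInfNorm_eq_zero {u : ℕ → E} (h : ∀ m, tailInfNorm u m = 0) :
    MapClusterPt 0 atTop u := by
  refine (Metric.nhds_basis_ball.mapClusterPt_iff_frequently).2 fun ε hε => ?_
  refine frequently_atTop.2 fun m => ?_
  obtain ⟨n, hn⟩ := exists_lt_of_ciInf_lt ((h m).trans_lt hε)
  exact ⟨n + m, Nat.le_add_left m n, mem_ball_zero_iff.2 hn⟩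

theorem Measurable.tailInfNorm {X : Type*} [MeasurableSpace X] [MeasurableSpace E]
    [OpensMeasurableSpace E] {G : ℕ → X → E} (hG : ∀ n, Measurable (G n)) (m : ℕ) :
    Measurable fun x => _root_.tailInfNorm (fun n => G n x) m :=
  .iInf fun n => continuous_norm.measurable.comp (hG (n + m))

end TailInfNorm

theorem ae_eq_zero_of_eventually_norm_le {X E : Type*} [MeasurableSpace X] [NormedAddCommGroup E]
    [MeasurableSpace E] {μ : Measure X} {N : (X → E) → ℝ≥0∞}
    (hzero : ∀ g : X → E, Measurable g → N g = 0 → g =ᵐ[μ] 0)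
    (hsolid : ∀ f g : X → E, Measurable f → Measurable g →
      (∀ᵐ x ∂μ, ‖f x‖ ≤ ‖g x‖) → N f ≤ N g)
    {G : ℕ → X → E} (hG : ∀ n, Measurable (G n)) (hGN : Tendsto (fun n => N (G n)) atTop (𝓝 0))
    {h : X → E} (hh : Measurable h) (hle : ∀ᶠ n in atTop, ∀ᵐ x ∂μ, ‖h x‖ ≤ ‖G n x‖) :
    h =ᵐ[μ] 0 :=
  hzero h hh <| nonpos_iff_eq_zero.1 <|
    ge_of_tendsto hGN (hle.mono fun n hn => hsolid h (G n) hh (hG n) hn)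

/-- If `N` is a solid quasi-norm functional on measurable functions on `X`
(`N g = 0` implies `g = 0` a.e., and `|f| ≤ |g|` a.e. implies `N f ≤ N g`), and
`N (fₙ - f) → 0`, then for a.e. `x` there is a subsequence (possibly depending on `x`)
along which `fₙ(x) → f(x)`. -/
theorem solid_quasinorm_convergence_ae_subseq
    {X : Type*} [MeasurableSpace X] (μ : Measure X)
    (N : (X → ℂ) → ℝ≥0∞)
    (hzero : ∀ g : X → ℂ, Measurable g → N g = 0 → g =ᵐ[μ] 0)
    (hsolid : ∀ f g : X → ℂ, Measurable f → Measurable g →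
      (∀ᵐ x ∂μ, ‖f x‖ ≤ ‖g x‖) → N f ≤ N g)
    (f : X → ℂ) (F : ℕ → X → ℂ)
    (hf : Measurable f) (hF : ∀ n, Measurable (F n))
    (hconv : Tendsto (fun n => N (F n - f)) atTop (nhds 0)) :
    ∀ᵐ x ∂μ, ∃ φ : ℕ → ℕ, StrictMono φ ∧
      Tendsto (fun k => F (φ k) x) atTop (nhds (f x)) := by
  have hG : ∀ n, Measurable (F n - f) := fun n => (hF n).sub hf
  have htail : ∀ m, ∀ᵐ x ∂μ, tailInfNorm (fun n => (F n - f) x) m = 0 := fun m => by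
    have hT := ae_eq_zero_of_eventually_norm_le hzero hsolid hG hconv
      (h := fun x => (tailInfNorm (fun n => (F n - f) x) m : ℂ))
      (Complex.measurable_ofReal.comp (Measurable.tailInfNorm hG m))
      (eventually_atTop.2 ⟨m, fun n hmn => ae_of_all μ fun x => by
        rw [Complex.norm_real, Real.norm_of_nonneg (tailInfNorm_nonneg _ m)]
        exact tailInfNorm_le_norm hmn⟩)
    filter_upwards [hT] with x hx
    exact Complex.ofReal_eq_zero.1 hx
  filter_upwards [ae_all_iff.2 htail] with x hx
  obtain ⟨φ, hφ, hlim⟩ := (mapClusterPt_zero_of_tailInfNorm_eq_zero hx).tendsto_subseq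
  exact ⟨φ, hφ, tendsto_sub_nhds_zero_iff.1 hlim⟩
end
end

section
/- Let Y be a rich solid QBF-space on X with quasi-norm constant C_Y and U = {U_i}_{i∈I} an admissible covering of X. Then ‖·|Y♭‖ is a quasi-norm on Y♭(U) with quasi-norm constant C_Y; Y♭(U) is solid in the sense that if |λ_i| ≤ |κ_i| for all i ∈ I and κ ∈ Y♭(U), then λ ∈ Y♭(U) with ‖λ|Y♭‖ ≤ ‖κ|Y♭‖; Y♭(U) contains all finitely supported sequences; and Y♭(U) is complete: every sequence (Λ_n) in Y♭(U) with ‖Λ_n − Λ_m|Y♭‖ → 0 as n,m → ∞ converges in ‖·|Y♭‖ to some Λ ∈ Y♭(U). The same statements hold for Y♮(U). -/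
open MeasureTheory Filter Topology
open scoped ENNReal NNReal

noncomputable section

/-- Model of a rich solid quasi-Banach function space `Y` on `(X, μ)`: `Y` is described by a
solid quasi-norm functional `N` on nonnegative extended-real valued functions (a measurable
`F : X → ℂ` belongs to `Y` iff `N (fun x => ‖F x‖₊) ≠ ∞`). -/
structure QBF (X : Type*) [MeasurableSpace X] (μ : MeasureTheory.Measure X) where
  /-- the quasi-norm functional -/
  N : (X → ℝ≥0∞) → ℝ≥0∞
  /-- the quasi-norm constant `C_Y` -/
  C : ℝ≥0∞
  one_le_C : 1 ≤ C
  C_ne_top : C ≠ ⊤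
  /-- solidity -/
  mono : ∀ f g : X → ℝ≥0∞, Measurable f → Measurable g →
    (∀ᵐ x ∂μ, f x ≤ g x) → N f ≤ N g
  /-- quasi-triangle inequality with constant `C_Y` -/
  add_le : ∀ f g : X → ℝ≥0∞, Measurable f → Measurable g →
    N (fun x => f x + g x) ≤ C * (N f + N g)
  /-- homogeneity -/
  smul_eq : ∀ (c : ℝ≥0∞) (f : X → ℝ≥0∞), Measurable f → N (fun x => c * f x) = c * N f
  /-- definiteness (up to a.e. equality) -/
  eq_zero : ∀ f : X → ℝ≥0∞, Measurable f → N f = 0 → f =ᵐ[μ] 0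
  /-- completeness of `Y` -/
  complete : ∀ F : ℕ → X → ℂ, (∀ n, Measurable (F n)) →
    (∀ n, N (fun x => (‖F n x‖₊ : ℝ≥0∞)) ≠ ⊤) →
    Filter.Tendsto (fun q : ℕ × ℕ => N (fun x => (‖F q.1 x - F q.2 x‖₊ : ℝ≥0∞)))
      Filter.atTop (nhds 0) →
    ∃ G : X → ℂ, Measurable G ∧ N (fun x => (‖G x‖₊ : ℝ≥0∞)) ≠ ⊤ ∧
      Filter.Tendsto (fun n => N (fun x => (‖F n x - G x‖₊ : ℝ≥0∞)))
        Filter.atTop (nhds 0)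

/-- An admissible covering of `X`: a locally finite covering by measurable, relatively
compact sets with nonempty interior and finite intersection number `σ`. -/
structure AdmissibleCovering {X : Type*} [TopologicalSpace X] [MeasurableSpace X]
    {I : Type*} (U : I → Set X) (σ : ℕ) : Prop where
  meas : ∀ i, MeasurableSet (U i)
  rel_compact : ∀ i, IsCompact (closure (U i))
  interior_nonempty : ∀ i, (interior (U i)).Nonempty
  covers : (⋃ i, U i) = Set.univ
  locFin : LocallyFinite U
  inter_finite : ∀ i, {j | (U i ∩ U j).Nonempty}.Finite
  inter_card_le : ∀ i, {j | (U i ∩ U j).Nonempty}.ncard ≤ σ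

variable {X : Type*} [TopologicalSpace X] [MeasurableSpace X] {μ : MeasureTheory.Measure X}

/-- The `Y♭(U)` quasi-norm of a sequence `λ`: `‖Σᵢ |λᵢ| χ_{Uᵢ} | Y‖`. -/
def flatN (Q : QBF X μ) {I : Type*} (U : I → Set X) (lam : I → ℂ) : ℝ≥0∞ :=
  Q.N (fun x => ∑' i, (U i).indicator (fun _ => (‖lam i‖₊ : ℝ≥0∞)) x)

/-- The `Y♮(U)` quasi-norm of a sequence `λ`: `‖Σᵢ |λᵢ| μ(Uᵢ)⁻¹ χ_{Uᵢ} | Y‖`. -/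
def natN (Q : QBF X μ) {I : Type*} (U : I → Set X) (lam : I → ℂ) : ℝ≥0∞ :=
  Q.N (fun x => ∑' i, (U i).indicator (fun _ => (‖lam i‖₊ : ℝ≥0∞) / μ (U i)) x)

/-!
Monotonicity, subadditivity and homogeneity of `λ ↦ Σᵢ |λᵢ| χ_{Uᵢ}` give the quasi-norm
properties and solidity of `Y♭(U)` from those of `Y`, and the bound
`|λᵢ| ‖χ_{Uᵢ}|Y‖ ≤ ‖λ|Y♭‖` controls each coordinate. For completeness, colour the
intersection graph of the covering with `σ + 1` colours. The sets `Uᵢ` of one colour are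
disjoint, so `Σᵢ λᵢ χ_{Uᵢ}` over one colour is linear in `λ` with modulus the corresponding part
of `Σᵢ |λᵢ| χ_{Uᵢ}`. A Cauchy sequence in `Y♭(U)` therefore yields finitely many Cauchy
sequences in `Y`. Their limits agree, on each `Uⱼ`, with the corresponding sums for the
coordinatewise limit, because only finitely many `Uᵢ` meet `Uⱼ`. Finally `Y♮(U)` is `Y♭(U)`
pulled back along the diagonal scaling `λᵢ ↦ μ(Uᵢ)⁻¹ λᵢ`.
-/

open Function

namespace QBF

variable {Ω : Type*} [MeasurableSpace Ω] {ν : Measure Ω} (Q : QBF Ω ν)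

theorem N_zero : Q.N (fun _ => 0) = 0 := by
  simpa using Q.smul_eq 0 (fun _ => 0) measurable_const

theorem N_congr_ae {f g : Ω → ℝ≥0∞} (hf : Measurable f) (hg : Measurable g) (h : f =ᵐ[ν] g) :
    Q.N f = Q.N g :=
  le_antisymm (Q.mono f g hf hg h.le) (Q.mono g f hg hf h.symm.le)

theorem N_indicator_const {A : Set Ω} (hA : MeasurableSet A) (c : ℝ≥0∞) :
    Q.N (A.indicator fun _ => c) = c * Q.N (A.indicator fun _ => 1) := by
  rw [← Q.smul_eq c _ (measurable_const.indicator hA)]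
  congr 1
  ext x
  by_cases hx : x ∈ A <;> simp [hx]

theorem N_indicator_ne_zero {A : Set Ω} (hA : MeasurableSet A) (hνA : ν A ≠ 0) :
    Q.N (A.indicator fun _ => 1) ≠ 0 := by
  intro h
  apply hνA
  refine measure_mono_null (fun x hx => ?_) (Q.eq_zero _ (measurable_const.indicator hA) h)
  simp [hx]

theorem N_finsetSum_le {κ : Type*} (s : Finset κ) (g : κ → Ω → ℝ≥0∞)
    (hg : ∀ k, Measurable (g k)) :
    Q.N (fun x => ∑ k ∈ s, g k x) ≤ Q.C ^ s.card * ∑ k ∈ s, Q.N (g k) := by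
  classical
  induction s using Finset.induction_on with
  | empty => simpa using (Q.N_zero).le
  | @insert a s ha ih =>
    have hC : 1 ≤ Q.C ^ s.card := one_le_pow₀ Q.one_le_C
    calc Q.N (fun x => ∑ k ∈ insert a s, g k x)
        ≤ Q.C * (Q.N (g a) + Q.N (fun x => ∑ k ∈ s, g k x)) := by
          simpa only [Finset.sum_insert ha] using
            Q.add_le _ _ (hg a) (Finset.measurable_sum s fun k _ => hg k)
      _ ≤ Q.C * (Q.C ^ s.card * Q.N (g a) + Q.C ^ s.card * ∑ k ∈ s, Q.N (g k)) := by
          gcongr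
          exact le_mul_of_one_le_left zero_le hC
      _ = Q.C ^ (insert a s).card * ∑ k ∈ insert a s, Q.N (g k) := by
          rw [Finset.card_insert_of_notMem ha, Finset.sum_insert ha, pow_succ]
          ring

theorem ae_eq_on_of_tendsto {A : Set Ω} (hA : MeasurableSet A) {F : ℕ → Ω → ℂ} {F' G : Ω → ℂ}
    (hF : ∀ n, Measurable (F n)) (hF' : Measurable F') (hG : Measurable G)
    (hFG : Tendsto (fun n => Q.N fun x => (‖F n x - G x‖₊ : ℝ≥0∞)) atTop (𝓝 0))
    (hFF' : Tendsto (fun n => Q.N (A.indicator fun x => (‖F n x - F' x‖₊ : ℝ≥0∞)))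
      atTop (𝓝 0)) :
    ∀ᵐ x ∂ν, x ∈ A → F' x = G x := by
  have hmeas : ∀ {f : Ω → ℂ}, Measurable f →
      Measurable (A.indicator fun x => (‖f x‖₊ : ℝ≥0∞)) := fun hf => hf.enorm.indicator hA
  have hbound : ∀ n, Q.N (A.indicator fun x => (‖F' x - G x‖₊ : ℝ≥0∞)) ≤
      Q.C * (Q.N (A.indicator fun x => (‖F n x - F' x‖₊ : ℝ≥0∞)) +
        Q.N fun x => (‖F n x - G x‖₊ : ℝ≥0∞)) := fun n =>
    calc _ ≤ Q.N (fun x => A.indicator (fun x => (‖F n x - F' x‖₊ : ℝ≥0∞)) x +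
            (‖F n x - G x‖₊ : ℝ≥0∞)) := by
          refine Q.mono _ _ (hmeas (hF'.sub hG))
            ((hmeas ((hF n).sub hF')).add ((hF n).sub hG).enorm) (ae_of_all _ fun x => ?_)
          by_cases hx : x ∈ A
          · simp only [Set.indicator_of_mem hx, ← ENNReal.coe_add, ENNReal.coe_le_coe]
            simpa [sub_sub_sub_cancel_left, add_comm] using
              nnnorm_sub_le (F n x - G x) (F n x - F' x)
          · simp [hx]
      _ ≤ _ := Q.add_le _ _ (hmeas ((hF n).sub hF')) ((hF n).sub hG).enorm
  have hlim : Tendsto (fun n => Q.C * (Q.N (A.indicator fun x => (‖F n x - F' x‖₊ : ℝ≥0∞)) +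
      Q.N fun x => (‖F n x - G x‖₊ : ℝ≥0∞))) atTop (𝓝 0) := by
    simpa using ENNReal.Tendsto.const_mul (hFF'.add hFG) (Or.inr Q.C_ne_top)
  have hzero := le_antisymm (ge_of_tendsto' hlim hbound) zero_le
  filter_upwards [Q.eq_zero _ (hmeas (hF'.sub hG)) hzero] with x hx hxA
  simpa [Set.indicator_of_mem hxA, sub_eq_zero] using hx

theorem tendsto_of_cauchy_of_tendsto_indicator {ι : Type*} [Countable ι] {A : ι → Set Ω}
    (hA : ∀ j, MeasurableSet (A j)) (hcover : ⋃ j, A j = Set.univ)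
    {F : ℕ → Ω → ℂ} {F' : Ω → ℂ} (hF : ∀ n, Measurable (F n)) (hF' : Measurable F')
    (hfin : ∀ n, Q.N (fun x => (‖F n x‖₊ : ℝ≥0∞)) ≠ ⊤)
    (hcauchy : Tendsto (fun q : ℕ × ℕ => Q.N fun x => (‖F q.1 x - F q.2 x‖₊ : ℝ≥0∞))
      atTop (𝓝 0))
    (hloc : ∀ j, Tendsto (fun n => Q.N ((A j).indicator fun x => (‖F n x - F' x‖₊ : ℝ≥0∞)))
      atTop (𝓝 0)) :
    Q.N (fun x => (‖F' x‖₊ : ℝ≥0∞)) ≠ ⊤ ∧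
      Tendsto (fun n => Q.N fun x => (‖F n x - F' x‖₊ : ℝ≥0∞)) atTop (𝓝 0) := by
  obtain ⟨G, hG, hGfin, hFG⟩ := Q.complete F hF hfin hcauchy
  have hF'G : F' =ᵐ[ν] G := by
    filter_upwards [ae_all_iff.2 fun j => Q.ae_eq_on_of_tendsto (hA j) hF hF' hG hFG (hloc j)]
      with x hx
    obtain ⟨j, hj⟩ := Set.mem_iUnion.1 (hcover.symm ▸ Set.mem_univ x : x ∈ ⋃ j, A j)
    exact hx j hj
  refine ⟨?_, ?_⟩
  · rwa [Q.N_congr_ae hF'.nnnorm.coe_nnreal_ennreal hG.nnnorm.coe_nnreal_ennreal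
      (hF'G.fun_comp fun z => (‖z‖₊ : ℝ≥0∞))]
  · refine hFG.congr fun n => Q.N_congr_ae ((hF n).sub hG).nnnorm.coe_nnreal_ennreal
      ((hF n).sub hF').nnnorm.coe_nnreal_ennreal ?_
    filter_upwards [hF'G] with x hx
    simp [hx]

end QBF

namespace SimpleGraph

variable {V : Type*} (G : SimpleGraph V) (e : V → ℕ)

def greedyColor (v : V) : ℕ :=
  sInf {k | ∀ w, G.Adj v w → e w < e v → greedyColor w ≠ k}
termination_by e v
decreasing_by assumption

theorem exists_greedyColor_candidate {v : V} (hfin : (G.neighborSet v).Finite) :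
    ∃ k ≤ (G.neighborSet v).ncard,
      ∀ w, G.Adj v w → e w < e v → G.greedyColor e w ≠ k := by
  classical
  have hcard : (hfin.toFinset.image (G.greedyColor e)).card <
      (Finset.range ((G.neighborSet v).ncard + 1)).card := by
    rw [Finset.card_range, Set.ncard_eq_toFinset_card _ hfin, Nat.lt_succ_iff]
    exact Finset.card_image_le
  obtain ⟨k, hk, hkfree⟩ := Finset.exists_mem_notMem_of_card_lt_card hcard
  refine ⟨k, Nat.lt_succ_iff.1 (Finset.mem_range.1 hk), fun w hvw _ hwk => hkfree ?_⟩
  exact Finset.mem_image.2 ⟨w, hfin.mem_toFinset.2 hvw, hwk⟩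

theorem greedyColor_ne {v w : V} (hfin : (G.neighborSet v).Finite) (hvw : G.Adj v w)
    (hwv : e w < e v) : G.greedyColor e w ≠ G.greedyColor e v := by
  obtain ⟨k, -, hk⟩ := G.exists_greedyColor_candidate e hfin
  have hmem :=
    Nat.sInf_mem (s := {c | ∀ w, G.Adj v w → e w < e v → G.greedyColor e w ≠ c}) ⟨k, hk⟩
  rw [← greedyColor.eq_1] at hmem
  exact hmem w hvw hwv

theorem greedyColor_le_ncard {v : V} (hfin : (G.neighborSet v).Finite) :
    G.greedyColor e v ≤ (G.neighborSet v).ncard := by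
  obtain ⟨k, hkd, hk⟩ := G.exists_greedyColor_candidate e hfin
  have hle := Nat.sInf_le (s := {c | ∀ w, G.Adj v w → e w < e v → G.greedyColor e w ≠ c}) hk
  rw [← greedyColor.eq_1] at hle
  exact hle.trans hkd

theorem colorable_of_ncard_neighborSet_le [Countable V] {d : ℕ}
    (hfin : ∀ v, (G.neighborSet v).Finite) (hd : ∀ v, (G.neighborSet v).ncard ≤ d) :
    G.Colorable (d + 1) := by
  obtain ⟨e, he⟩ := exists_injective_nat V
  refine ⟨Coloring.mk (fun v => ⟨G.greedyColor e v,
    Nat.lt_succ_of_le ((G.greedyColor_le_ncard e (hfin v)).trans (hd v))⟩) fun {v w} hvw => ?_⟩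
  simp only [ne_eq, Fin.mk.injEq]
  rcases lt_trichotomy (e v) (e w) with h | h | h
  · exact G.greedyColor_ne e (hfin w) hvw.symm h
  · exact absurd (he h) hvw.ne
  · exact (G.greedyColor_ne e (hfin v) hvw h).symm

end SimpleGraph

section IndicatorSum

variable {α ι : Type*} {V W : ι → Set α}

def indicatorSum {M : Type*} [AddCommMonoid M] [TopologicalSpace M] (V : ι → Set α)
    (a : ι → M) (x : α) : M :=
  ∑' i, (V i).indicator (fun _ => a i) x

theorem indicatorSum_of_mem {M : Type*} [AddCommMonoid M] [TopologicalSpace M]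
    (hV : Pairwise (Disjoint on V)) (a : ι → M) {x : α} {i : ι}
    (hx : x ∈ V i) : indicatorSum V a x = a i := by
  rw [indicatorSum, tsum_eq_single i fun j hji =>
    Set.indicator_of_notMem (Set.disjoint_left.1 (hV hji.symm) hx) _]
  exact Set.indicator_of_mem hx _

theorem indicatorSum_of_forall_notMem {M : Type*} [AddCommMonoid M] [TopologicalSpace M]
    (a : ι → M) {x : α} (hx : ∀ i, x ∉ V i) :
    indicatorSum V a x = 0 := by
  simp [indicatorSum, Set.indicator_of_notMem (hx _)]

theorem indicatorSum_sub {G : Type*} [AddCommGroup G] [TopologicalSpace G]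
    (hV : Pairwise (Disjoint on V)) (a b : ι → G) (x : α) :
    indicatorSum V (a - b) x = indicatorSum V a x - indicatorSum V b x := by
  by_cases hx : ∃ i, x ∈ V i
  · obtain ⟨i, hi⟩ := hx
    simp [indicatorSum_of_mem hV _ hi]
  · push Not at hx
    simp [indicatorSum_of_forall_notMem _ hx]

theorem nnnorm_indicatorSum {E : Type*} [SeminormedAddCommGroup E]
    (hV : Pairwise (Disjoint on V)) (a : ι → E) (x : α) :
    (‖indicatorSum V a x‖₊ : ℝ≥0∞) = indicatorSum V (fun i => (‖a i‖₊ : ℝ≥0∞)) x := by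
  by_cases hx : ∃ i, x ∈ V i
  · obtain ⟨i, hi⟩ := hx
    simp [indicatorSum_of_mem hV _ hi]
  · push Not at hx
    simp [indicatorSum_of_forall_notMem _ hx]

theorem nnnorm_indicatorSum_sub {E : Type*} [SeminormedAddCommGroup E]
    (hV : Pairwise (Disjoint on V)) (a b : ι → E) :
    (fun x => (‖indicatorSum V a x - indicatorSum V b x‖₊ : ℝ≥0∞)) =
      indicatorSum V fun i => (‖a i - b i‖₊ : ℝ≥0∞) :=
  funext fun x => by rw [← indicatorSum_sub hV, nnnorm_indicatorSum hV]; rfl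

theorem measurable_indicatorSum {E : Type*} [AddCommMonoid E] [TopologicalSpace E]
    [TopologicalSpace.IsCompletelyPseudoMetrizableSpace E] [SecondCountableTopology E]
    [MeasurableSpace E] [BorelSpace E] [MeasurableAdd₂ E] [MeasurableSpace α] [Countable ι]
    (hVm : ∀ i, MeasurableSet (V i)) (a : ι → E) : Measurable (indicatorSum V a) :=
  Measurable.tsum fun i => measurable_const.indicator (hVm i)

theorem indicator_le_indicatorSum (a : ι → ℝ≥0∞) (i : ι) (x : α) :
    (V i).indicator (fun _ => a i) x ≤ indicatorSum V a x :=
  ENNReal.le_tsum i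

theorem indicatorSum_mono {a b : ι → ℝ≥0∞} (h : a ≤ b) (x : α) :
    indicatorSum V a x ≤ indicatorSum V b x :=
  ENNReal.tsum_le_tsum fun i => Set.indicator_le_indicator (h i)

theorem indicatorSum_mono_set (h : ∀ i, V i ⊆ W i) (a : ι → ℝ≥0∞) (x : α) :
    indicatorSum V a x ≤ indicatorSum W a x :=
  ENNReal.tsum_le_tsum fun i => Set.indicator_le_indicator_of_subset (h i) (fun _ => zero_le) x

theorem indicatorSum_add (a b : ι → ℝ≥0∞) (x : α) :
    indicatorSum V (a + b) x = indicatorSum V a x + indicatorSum V b x := by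
  simp only [indicatorSum, Pi.add_apply, ← ENNReal.tsum_add]
  exact tsum_congr fun i => by by_cases hx : x ∈ V i <;> simp [hx]

theorem indicatorSum_const_mul (c : ℝ≥0∞) (a : ι → ℝ≥0∞) (x : α) :
    indicatorSum V (fun i => c * a i) x = c * indicatorSum V a x := by
  simp only [indicatorSum, ← ENNReal.tsum_mul_left]
  exact tsum_congr fun i => by by_cases hx : x ∈ V i <;> simp [hx]

def colorClass {κ : Type*} [DecidableEq κ] (V : ι → Set α) (col : ι → κ) (k : κ) (i : ι) :
    Set α :=
  if col i = k then V i else ∅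

theorem colorClass_subset {κ : Type*} [DecidableEq κ] (col : ι → κ) (k : κ) (i : ι) :
    colorClass V col k i ⊆ V i := by
  unfold colorClass
  split_ifs
  exacts [subset_rfl, Set.empty_subset _]

theorem measurableSet_colorClass [MeasurableSpace α] {κ : Type*} [DecidableEq κ]
    (hVm : ∀ i, MeasurableSet (V i)) (col : ι → κ) (k : κ) (i : ι) :
    MeasurableSet (colorClass V col k i) := by
  unfold colorClass
  split_ifs
  exacts [hVm i, .empty]

theorem indicatorSum_eq_sum_colorClass {κ : Type*} [Fintype κ] [DecidableEq κ] (col : ι → κ)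
    (a : ι → ℝ≥0∞) (x : α) :
    indicatorSum V a x = ∑ k, indicatorSum (colorClass V col k) a x := by
  simp only [indicatorSum, colorClass]
  rw [← Summable.tsum_finsetSum fun k _ => ENNReal.summable]
  refine tsum_congr fun i => ?_
  simp [apply_ite (fun s : Set α => s.indicator (fun _ => a i) x)]

theorem indicatorSum_le_sum_of_mem {A : Set α} (hA : {i | (A ∩ V i).Nonempty}.Finite)
    (a : ι → ℝ≥0∞) {x : α} (hx : x ∈ A) :
    indicatorSum V a x ≤ ∑ i ∈ hA.toFinset, a i := by
  rw [indicatorSum, tsum_eq_sum fun i hi => Set.indicator_of_notMem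
    (fun hxi => hi (hA.mem_toFinset.2 ⟨x, hx, hxi⟩)) _]
  exact Finset.sum_le_sum fun i _ => Set.indicator_le_self' (fun _ _ => zero_le) x

end IndicatorSum

namespace AdmissibleCovering

variable {I : Type*} {U : I → Set X} {σ : ℕ}

theorem nonempty (hU : AdmissibleCovering U σ) (i : I) : (U i).Nonempty :=
  (hU.interior_nonempty i).mono interior_subset

theorem countable (hU : AdmissibleCovering U σ) [SigmaCompactSpace X] : Countable I :=
  Set.countable_univ_iff.1 (hU.locFin.countable_univ hU.nonempty)

theorem measure_ne_zero (hU : AdmissibleCovering U σ)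
    (hsupp : ∀ V : Set X, IsOpen V → V.Nonempty → 0 < μ V) (i : I) : μ (U i) ≠ 0 :=
  ((hsupp _ isOpen_interior (hU.interior_nonempty i)).trans_le
    (measure_mono interior_subset)).ne'

theorem measure_ne_top (hU : AdmissibleCovering U σ) [IsFiniteMeasureOnCompacts μ] (i : I) :
    μ (U i) ≠ ⊤ :=
  ((measure_mono subset_closure).trans_lt (hU.rel_compact i).measure_lt_top).ne

theorem N_indicator_ne_top (hU : AdmissibleCovering U σ) [OpensMeasurableSpace X] (Q : QBF X μ)
    (hrich : ∀ K : Set X, IsCompact K → Q.N (K.indicator fun _ => 1) ≠ ⊤) (i : I) :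
    Q.N ((U i).indicator fun _ => 1) ≠ ⊤ :=
  ne_top_of_le_ne_top (hrich _ (hU.rel_compact i)) <|
    Q.mono _ _ (measurable_const.indicator (hU.meas i))
      (measurable_const.indicator isClosed_closure.measurableSet)
      (ae_of_all _ (Set.indicator_le_indicator_of_subset subset_closure fun _ => zero_le))

theorem exists_pairwise_disjoint_colorClass (hU : AdmissibleCovering U σ)
    [SigmaCompactSpace X] :
    ∃ col : I → Fin (σ + 1), ∀ k, Pairwise (Disjoint on colorClass U col k) := by
  have := hU.countable
  let G := SimpleGraph.fromRel fun i j => (U i ∩ U j).Nonempty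
  have hnbhd (i : I) : G.neighborSet i ⊆ {j | (U i ∩ U j).Nonempty} := by
    rintro j ⟨-, hij | hji⟩
    exacts [hij, by rwa [Set.inter_comm] at hji]
  obtain ⟨col⟩ := G.colorable_of_ncard_neighborSet_le
    (fun i => (hU.inter_finite i).subset (hnbhd i))
    (fun i => (Set.ncard_le_ncard (hnbhd i) (hU.inter_finite i)).trans (hU.inter_card_le i))
  refine ⟨col, fun k i j hij => ?_⟩
  simp only [onFun, colorClass]
  split_ifs with hi hj
  · rw [Set.disjoint_iff_inter_eq_empty, ← Set.not_nonempty_iff_eq_empty]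
    exact fun hne => col.valid (SimpleGraph.fromRel_adj _ i j |>.2 ⟨hij, .inl hne⟩)
      (hi.trans hj.symm)
  all_goals simp

end AdmissibleCovering

section Flat

variable {Ω : Type*} [MeasurableSpace Ω] {ν : Measure Ω} (Q : QBF Ω ν) {I : Type*}
  {U : I → Set Ω}

theorem flatN_eq_N_indicatorSum (lam : I → ℂ) :
    flatN Q U lam = Q.N (indicatorSum U fun i => (‖lam i‖₊ : ℝ≥0∞)) :=
  rfl

theorem flatN_add_le [Countable I] (hUm : ∀ i, MeasurableSet (U i)) (lam kap : I → ℂ) :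
    flatN Q U (lam + kap) ≤ Q.C * (flatN Q U lam + flatN Q U kap) := by
  have hm := measurable_indicatorSum (E := ℝ≥0∞) hUm
  calc flatN Q U (lam + kap)
      ≤ Q.N (fun x => indicatorSum U (fun i => (‖lam i‖₊ : ℝ≥0∞)) x +
          indicatorSum U (fun i => (‖kap i‖₊ : ℝ≥0∞)) x) := by
        refine Q.mono _ _ (hm _) ((hm _).add (hm _)) (ae_of_all _ fun x => ?_)
        rw [← indicatorSum_add]
        refine indicatorSum_mono (fun i => ?_) x
        simp only [Pi.add_apply]
        exact_mod_cast nnnorm_add_le (lam i) (kap i)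
    _ ≤ Q.C * (flatN Q U lam + flatN Q U kap) := Q.add_le _ _ (hm _) (hm _)

theorem flatN_smul [Countable I] (hUm : ∀ i, MeasurableSet (U i)) (c : ℂ) (lam : I → ℂ) :
    flatN Q U (c • lam) = (‖c‖₊ : ℝ≥0∞) * flatN Q U lam := by
  rw [flatN_eq_N_indicatorSum, flatN_eq_N_indicatorSum, ← Q.smul_eq _ _
    (measurable_indicatorSum hUm _), ← funext (indicatorSum_const_mul (V := U) _ _)]
  simp

theorem flatN_mono [Countable I] (hUm : ∀ i, MeasurableSet (U i)) {lam kap : I → ℂ}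
    (h : ∀ i, ‖lam i‖ ≤ ‖kap i‖) :
    flatN Q U lam ≤ flatN Q U kap :=
  Q.mono _ _ (measurable_indicatorSum hUm _) (measurable_indicatorSum hUm _)
    (ae_of_all _ (indicatorSum_mono fun i => ENNReal.coe_le_coe.2 (h i)))

theorem nnnorm_mul_N_indicator_le_flatN [Countable I] (hUm : ∀ i, MeasurableSet (U i))
    (lam : I → ℂ) (i : I) :
    (‖lam i‖₊ : ℝ≥0∞) * Q.N ((U i).indicator fun _ => 1) ≤ flatN Q U lam := by
  rw [← Q.N_indicator_const (hUm i)]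
  exact Q.mono _ _ (measurable_const.indicator (hUm i)) (measurable_indicatorSum hUm _)
    (ae_of_all _ (indicator_le_indicatorSum _ i))

theorem flatN_eq_zero [Countable I] (hUm : ∀ i, MeasurableSet (U i))
    (hpos : ∀ i, Q.N ((U i).indicator fun _ => 1) ≠ 0) {lam : I → ℂ}
    (h : flatN Q U lam = 0) : lam = 0 := by
  ext i
  have hi := nnnorm_mul_N_indicator_le_flatN Q hUm lam i
  rw [h, nonpos_iff_eq_zero, mul_eq_zero] at hi
  simpa [hpos i] using hi

theorem flatN_ne_top_of_finite_support (hUm : ∀ i, MeasurableSet (U i))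
    (htop : ∀ i, Q.N ((U i).indicator fun _ => 1) ≠ ⊤)
    {lam : I → ℂ} (hfin : (Function.support lam).Finite) : flatN Q U lam ≠ ⊤ := by
  have hsum : indicatorSum U (fun i => (‖lam i‖₊ : ℝ≥0∞)) =
      fun x => ∑ i ∈ hfin.toFinset, (U i).indicator (fun _ => (‖lam i‖₊ : ℝ≥0∞)) x :=
    funext fun x => tsum_eq_sum fun i hi => by
      simp [Function.notMem_support.1 fun h => hi (hfin.mem_toFinset.2 h)]
  rw [flatN_eq_N_indicatorSum, hsum]
  refine ne_top_of_le_ne_top ?_ (Q.N_finsetSum_le _ _ fun i => measurable_const.indicator (hUm i))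
  rw [Finset.sum_congr rfl fun i _ => Q.N_indicator_const (hUm i) _]
  exact ENNReal.mul_ne_top (ENNReal.pow_ne_top Q.C_ne_top) <| ENNReal.sum_ne_top.2 fun i _ =>
    ENNReal.mul_ne_top ENNReal.coe_ne_top (htop i)

theorem cauchySeq_apply_of_flatN [Countable I] (hUm : ∀ i, MeasurableSet (U i)) {Λ : ℕ → I → ℂ}
    {i : I} (hpos : Q.N ((U i).indicator fun _ => 1) ≠ 0)
    (htop : Q.N ((U i).indicator fun _ => 1) ≠ ⊤)
    (hcauchy : Tendsto (fun q : ℕ × ℕ => flatN Q U (Λ q.1 - Λ q.2)) atTop (𝓝 0)) :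
    CauchySeq fun n => Λ n i := by
  have hedist : Tendsto (fun q : ℕ × ℕ => edist (Λ q.1 i) (Λ q.2 i)) atTop (𝓝 0) := by
    refine tendsto_of_tendsto_of_tendsto_of_le_of_le tendsto_const_nhds
      (by simpa using ENNReal.Tendsto.div_const hcauchy (Or.inr hpos)) (fun _ => zero_le)
      fun q => ?_
    rw [edist_eq_enorm_sub, ENNReal.le_div_iff_mul_le (.inl hpos) (.inl htop)]
    exact nnnorm_mul_N_indicator_le_flatN Q hUm (Λ q.1 - Λ q.2) i
  rw [cauchySeq_iff_tendsto_dist_atTop_0]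
  simpa [dist_edist, Function.comp_def] using
    (ENNReal.tendsto_toReal ENNReal.zero_ne_top).comp hedist

theorem flatN_le_sum_colorClass [Countable I] (hUm : ∀ i, MeasurableSet (U i)) {κ : Type*}
    [Fintype κ] [DecidableEq κ] (col : I → κ) (lam : I → ℂ) :
    flatN Q U lam ≤
      Q.C ^ Fintype.card κ * ∑ k, Q.N (indicatorSum (colorClass U col k) fun i => ‖lam i‖₊) := by
  rw [flatN_eq_N_indicatorSum, funext (indicatorSum_eq_sum_colorClass col _)]
  exact Q.N_finsetSum_le Finset.univ _ fun k =>
    measurable_indicatorSum (measurableSet_colorClass hUm col k) _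

theorem tendsto_N_indicator_indicatorSum [Countable I] (hUm : ∀ i, MeasurableSet (U i))
    {A : Set Ω} (hAm : MeasurableSet A) (hA : {i | (A ∩ U i).Nonempty}.Finite)
    (hAtop : Q.N (A.indicator fun _ => 1) ≠ ⊤) {Λ : ℕ → I → ℂ} {Λ' : I → ℂ}
    (hΛ : ∀ i, Tendsto (fun n => Λ n i) atTop (𝓝 (Λ' i))) :
    Tendsto (fun n => Q.N (A.indicator (indicatorSum U fun i => ‖Λ n i - Λ' i‖₊))) atTop
      (𝓝 0) := by
  have hsum : Tendsto (fun n => ∑ i ∈ hA.toFinset, (‖Λ n i - Λ' i‖₊ : ℝ≥0∞)) atTop (𝓝 0) := by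
    simpa [edist_eq_enorm_sub, enorm_eq_nnnorm] using
      tendsto_finsetSum hA.toFinset fun i _ => tendsto_iff_edist_tendsto_0.1 (hΛ i)
  have hlim := ENNReal.Tendsto.mul_const hsum (.inr hAtop)
  rw [zero_mul] at hlim
  refine tendsto_of_tendsto_of_tendsto_of_le_of_le tendsto_const_nhds hlim (fun _ => zero_le)
    fun n => ?_
  rw [← Q.N_indicator_const hAm]
  refine Q.mono _ _ ((measurable_indicatorSum hUm _).indicator hAm)
    (measurable_const.indicator hAm) (ae_of_all _ fun x => ?_)
  by_cases hx : x ∈ A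
  · simpa only [Set.indicator_of_mem hx] using indicatorSum_le_sum_of_mem hA _ hx
  · simp [hx]

end Flat

theorem tendsto_N_indicatorSum_of_subset {I : Type*} [Countable I] {U : I → Set X} {σ : ℕ}
    (hU : AdmissibleCovering U σ) (Q : QBF X μ)
    (htop : ∀ i, Q.N ((U i).indicator fun _ => 1) ≠ ⊤) {V : I → Set X}
    (hVm : ∀ i, MeasurableSet (V i)) (hV : Pairwise (Disjoint on V)) (hVU : ∀ i, V i ⊆ U i)
    {Λ : ℕ → I → ℂ} {Λ' : I → ℂ} (hfin : ∀ n, flatN Q U (Λ n) ≠ ⊤)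
    (hcauchy : Tendsto (fun q : ℕ × ℕ => flatN Q U (Λ q.1 - Λ q.2)) atTop (𝓝 0))
    (hΛ' : ∀ i, Tendsto (fun n => Λ n i) atTop (𝓝 (Λ' i))) :
    Q.N (fun x => (‖indicatorSum V Λ' x‖₊ : ℝ≥0∞)) ≠ ⊤ ∧
      Tendsto (fun n => Q.N fun x => (‖indicatorSum V (Λ n) x - indicatorSum V Λ' x‖₊ : ℝ≥0∞))
        atTop (𝓝 0) := by
  have hle (a : I → ℝ≥0∞) : Q.N (indicatorSum V a) ≤ Q.N (indicatorSum U a) :=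
    Q.mono _ _ (measurable_indicatorSum hVm a) (measurable_indicatorSum hU.meas a)
      (ae_of_all _ (indicatorSum_mono_set hVU a))
  refine Q.tendsto_of_cauchy_of_tendsto_indicator hU.meas hU.covers
    (F := fun n => indicatorSum V (Λ n)) (fun n => measurable_indicatorSum hVm _)
    (measurable_indicatorSum hVm Λ') (fun n => ?_) ?_ fun j => ?_
  · rw [funext (nnnorm_indicatorSum hV (Λ n))]
    exact ne_top_of_le_ne_top (hfin n) (hle _)
  · refine tendsto_of_tendsto_of_tendsto_of_le_of_le tendsto_const_nhds hcauchy
      (fun _ => zero_le) fun q => ?_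
    rw [nnnorm_indicatorSum_sub hV]
    exact hle _
  · refine tendsto_of_tendsto_of_tendsto_of_le_of_le tendsto_const_nhds
      (tendsto_N_indicator_indicatorSum Q hU.meas (hU.meas j) (hU.inter_finite j) (htop j) hΛ')
      (fun _ => zero_le) fun n => ?_
    rw [nnnorm_indicatorSum_sub hV]
    exact Q.mono _ _ ((measurable_indicatorSum hVm _).indicator (hU.meas j))
      ((measurable_indicatorSum hU.meas _).indicator (hU.meas j))
      (ae_of_all _ (Set.indicator_mono (indicatorSum_mono_set hVU _)))

theorem flatN_complete [SigmaCompactSpace X] (Q : QBF X μ) {I : Type*} {U : I → Set X} {σ : ℕ}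
    (hU : AdmissibleCovering U σ) (hpos : ∀ i, Q.N ((U i).indicator fun _ => 1) ≠ 0)
    (htop : ∀ i, Q.N ((U i).indicator fun _ => 1) ≠ ⊤) {Λ : ℕ → I → ℂ}
    (hfin : ∀ n, flatN Q U (Λ n) ≠ ⊤)
    (hcauchy : Tendsto (fun q : ℕ × ℕ => flatN Q U (Λ q.1 - Λ q.2)) atTop (𝓝 0)) :
    ∃ Λ' : I → ℂ, flatN Q U Λ' ≠ ⊤ ∧ Tendsto (fun n => flatN Q U (Λ n - Λ')) atTop (𝓝 0) := by
  have := hU.countable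
  choose Λ' hΛ' using fun i => cauchySeq_tendsto_of_complete
    (cauchySeq_apply_of_flatN Q hU.meas (hpos i) (htop i) hcauchy)
  obtain ⟨col, hcol⟩ := hU.exists_pairwise_disjoint_colorClass
  have hslice (k : Fin (σ + 1)) := tendsto_N_indicatorSum_of_subset hU Q htop
    (measurableSet_colorClass hU.meas col k) (hcol k) (colorClass_subset col k) hfin hcauchy hΛ'
  refine ⟨Λ', ?_, ?_⟩
  · refine ne_top_of_le_ne_top ?_ (flatN_le_sum_colorClass Q hU.meas col Λ')
    refine ENNReal.mul_ne_top (ENNReal.pow_ne_top Q.C_ne_top) (ENNReal.sum_ne_top.2 fun k _ => ?_)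
    rw [← funext (nnnorm_indicatorSum (hcol k) Λ')]
    exact (hslice k).1
  · have hlim := ENNReal.Tendsto.const_mul (a := Q.C ^ Fintype.card (Fin (σ + 1)))
      (tendsto_finsetSum Finset.univ fun k _ => (hslice k).2)
      (.inr (ENNReal.pow_ne_top Q.C_ne_top))
    simp only [Finset.sum_const_zero, mul_zero, nnnorm_indicatorSum_sub (hcol _)] at hlim
    exact tendsto_of_tendsto_of_tendsto_of_le_of_le tendsto_const_nhds hlim (fun _ => zero_le)
      fun n => flatN_le_sum_colorClass Q hU.meas col (Λ n - Λ')

def IsRichSolidQuasiBanach {I : Type*} (ρ : (I → ℂ) → ℝ≥0∞) (C : ℝ≥0∞) : Prop :=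
  (∀ lam kap : I → ℂ, ρ (lam + kap) ≤ C * (ρ lam + ρ kap)) ∧
  (∀ (c : ℂ) (lam : I → ℂ), ρ (c • lam) = (‖c‖₊ : ℝ≥0∞) * ρ lam) ∧
  (∀ lam : I → ℂ, ρ lam = 0 → lam = 0) ∧
  (∀ lam kap : I → ℂ, (∀ i, ‖lam i‖ ≤ ‖kap i‖) → ρ lam ≤ ρ kap) ∧
  (∀ lam : I → ℂ, (Function.support lam).Finite → ρ lam ≠ ⊤) ∧
  (∀ Λ : ℕ → I → ℂ, (∀ n, ρ (Λ n) ≠ ⊤) →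
    Tendsto (fun q : ℕ × ℕ => ρ (Λ q.1 - Λ q.2)) atTop (nhds 0) →
    ∃ Λ' : I → ℂ, ρ Λ' ≠ ⊤ ∧ Tendsto (fun n => ρ (Λ n - Λ')) atTop (nhds 0))

theorem IsRichSolidQuasiBanach.comp_mul {I : Type*} {ρ : (I → ℂ) → ℝ≥0∞} {C : ℝ≥0∞}
    (h : IsRichSolidQuasiBanach ρ C) {w : I → ℂ} (hw : ∀ i, w i ≠ 0) :
    IsRichSolidQuasiBanach (fun lam => ρ (w * lam)) C := by
  obtain ⟨hadd, hsmul, hzero, hmono, hfin, hcomplete⟩ := h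
  have hcancel (lam : I → ℂ) : w * (w⁻¹ * lam) = lam := by
    ext i
    simp [hw i]
  refine ⟨fun lam kap => by simpa only [mul_add] using hadd _ _,
    fun c lam => by simpa only [mul_smul_comm] using hsmul c (w * lam),
    fun lam h0 => funext fun i => by simpa [hw i] using congrFun (hzero _ h0) i,
    fun lam kap hle => hmono _ _ fun i => by
      simpa only [Pi.mul_apply, norm_mul] using mul_le_mul_of_nonneg_left (hle i) (norm_nonneg _),
    fun lam hl => hfin _ (hl.subset (Function.support_mul_subset_right _ _)),
    fun Λ hΛ hcauchy => ?_⟩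
  obtain ⟨Λ', hΛ'fin, hlim⟩ :=
    hcomplete (fun n => w * Λ n) hΛ (by simpa only [mul_sub] using hcauchy)
  refine ⟨w⁻¹ * Λ', show ρ (w * (w⁻¹ * Λ')) ≠ ⊤ by rwa [hcancel], ?_⟩
  simpa only [mul_sub, hcancel] using hlim

theorem isRichSolidQuasiBanach_flatN [SigmaCompactSpace X] [OpensMeasurableSpace X]
    (hsupp : ∀ V : Set X, IsOpen V → V.Nonempty → 0 < μ V) (Q : QBF X μ)
    (hrich : ∀ K : Set X, IsCompact K → Q.N (K.indicator fun _ => 1) ≠ ⊤)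
    {I : Type*} {U : I → Set X} {σ : ℕ} (hU : AdmissibleCovering U σ) :
    IsRichSolidQuasiBanach (flatN Q U) Q.C := by
  have := hU.countable
  have hpos (i : I) := Q.N_indicator_ne_zero (hU.meas i) (hU.measure_ne_zero hsupp i)
  have htop := hU.N_indicator_ne_top Q hrich
  exact ⟨flatN_add_le Q hU.meas, flatN_smul Q hU.meas, fun _ => flatN_eq_zero Q hU.meas hpos,
    fun _ _ => flatN_mono Q hU.meas, fun _ => flatN_ne_top_of_finite_support Q hU.meas htop,
    fun _ => flatN_complete Q hU hpos htop⟩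

theorem natN_eq_flatN_mul {Ω : Type*} [MeasurableSpace Ω] {ν : Measure Ω} (Q : QBF Ω ν)
    {I : Type*} {U : I → Set Ω} (h0 : ∀ i, ν (U i) ≠ 0) :
    natN Q U = fun lam => flatN Q U ((fun i => (((ν (U i))⁻¹.toReal : ℝ) : ℂ)) * lam) := by
  ext lam
  simp only [natN, flatN, Pi.mul_apply, nnnorm_mul, Complex.nnnorm_real, ENNReal.coe_mul,
    ← enorm_eq_nnnorm, Real.enorm_eq_ofReal ENNReal.toReal_nonneg,
    ENNReal.ofReal_toReal (ENNReal.inv_ne_top.2 (h0 _)), ENNReal.div_eq_inv_mul]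

theorem sequence_spaces_rich_solid_complete_general
    [BorelSpace X] [SigmaCompactSpace X]
    [IsFiniteMeasureOnCompacts μ]
    (hsupp : ∀ V : Set X, IsOpen V → V.Nonempty → 0 < μ V)
    (Q : QBF X μ)
    (hrich : ∀ K : Set X, IsCompact K → Q.N (K.indicator fun _ => 1) ≠ ⊤)
    {I : Type*} (U : I → Set X) (σ : ℕ) (hU : AdmissibleCovering U σ) :
    -- `Y♭(U)`:
    ((∀ lam kap : I → ℂ,
        flatN Q U (lam + kap) ≤ Q.C * (flatN Q U lam + flatN Q U kap)) ∧
     (∀ (c : ℂ) (lam : I → ℂ), flatN Q U (c • lam) = (‖c‖₊ : ℝ≥0∞) * flatN Q U lam) ∧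
     (∀ lam : I → ℂ, flatN Q U lam = 0 → lam = 0) ∧
     (∀ lam kap : I → ℂ, (∀ i, ‖lam i‖ ≤ ‖kap i‖) → flatN Q U lam ≤ flatN Q U kap) ∧
     (∀ lam : I → ℂ, (Function.support lam).Finite → flatN Q U lam ≠ ⊤) ∧
     (∀ Λ : ℕ → I → ℂ, (∀ n, flatN Q U (Λ n) ≠ ⊤) →
        Tendsto (fun q : ℕ × ℕ => flatN Q U (Λ q.1 - Λ q.2)) atTop (nhds 0) →
        ∃ Λ' : I → ℂ, flatN Q U Λ' ≠ ⊤ ∧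
          Tendsto (fun n => flatN Q U (Λ n - Λ')) atTop (nhds 0))) ∧
    -- `Y♮(U)`:
    ((∀ lam kap : I → ℂ,
        natN Q U (lam + kap) ≤ Q.C * (natN Q U lam + natN Q U kap)) ∧
     (∀ (c : ℂ) (lam : I → ℂ), natN Q U (c • lam) = (‖c‖₊ : ℝ≥0∞) * natN Q U lam) ∧
     (∀ lam : I → ℂ, natN Q U lam = 0 → lam = 0) ∧
     (∀ lam kap : I → ℂ, (∀ i, ‖lam i‖ ≤ ‖kap i‖) → natN Q U lam ≤ natN Q U kap) ∧
     (∀ lam : I → ℂ, (Function.support lam).Finite → natN Q U lam ≠ ⊤) ∧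
     (∀ Λ : ℕ → I → ℂ, (∀ n, natN Q U (Λ n) ≠ ⊤) →
        Tendsto (fun q : ℕ × ℕ => natN Q U (Λ q.1 - Λ q.2)) atTop (nhds 0) →
        ∃ Λ' : I → ℂ, natN Q U Λ' ≠ ⊤ ∧
          Tendsto (fun n => natN Q U (Λ n - Λ')) atTop (nhds 0))) := by
  have hflat := isRichSolidQuasiBanach_flatN hsupp Q hrich hU
  have h0 := hU.measure_ne_zero hsupp
  have hnat : IsRichSolidQuasiBanach (natN Q U) Q.C := by
    rw [natN_eq_flatN_mul Q h0]
    refine hflat.comp_mul fun i => Complex.ofReal_ne_zero.2 ?_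
    exact ENNReal.toReal_ne_zero.2 ⟨ENNReal.inv_ne_zero.2 (hU.measure_ne_top i),
      ENNReal.inv_ne_top.2 (h0 i)⟩
  exact ⟨hflat, hnat⟩

/-- For a rich solid QBF-space `Y` on `X` and an admissible covering `U`,
the sequence spaces `Y♭(U)` and `Y♮(U)` are rich solid quasi-Banach sequence spaces with the
same quasi-norm constant `C_Y` as `Y`: the quasi-triangle inequality holds with constant
`C_Y`, the quasi-norms are homogeneous and definite, the spaces are solid, contain all
finitely supported sequences, and are complete. -/
theorem sequence_spaces_rich_solid_complete
    [BorelSpace X] [T2Space X] [LocallyCompactSpace X] [SigmaCompactSpace X]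
    [IsFiniteMeasureOnCompacts μ]
    (hsupp : ∀ V : Set X, IsOpen V → V.Nonempty → 0 < μ V)
    (Q : QBF X μ)
    (hrich : ∀ K : Set X, IsCompact K → Q.N (K.indicator fun _ => 1) ≠ ⊤)
    {I : Type*} (U : I → Set X) (σ : ℕ) (hU : AdmissibleCovering U σ) :
    -- `Y♭(U)`:
    ((∀ lam kap : I → ℂ,
        flatN Q U (lam + kap) ≤ Q.C * (flatN Q U lam + flatN Q U kap)) ∧
     (∀ (c : ℂ) (lam : I → ℂ), flatN Q U (c • lam) = (‖c‖₊ : ℝ≥0∞) * flatN Q U lam) ∧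
     (∀ lam : I → ℂ, flatN Q U lam = 0 → lam = 0) ∧
     (∀ lam kap : I → ℂ, (∀ i, ‖lam i‖ ≤ ‖kap i‖) → flatN Q U lam ≤ flatN Q U kap) ∧
     (∀ lam : I → ℂ, (Function.support lam).Finite → flatN Q U lam ≠ ⊤) ∧
     (∀ Λ : ℕ → I → ℂ, (∀ n, flatN Q U (Λ n) ≠ ⊤) →
        Tendsto (fun q : ℕ × ℕ => flatN Q U (Λ q.1 - Λ q.2)) atTop (nhds 0) →
        ∃ Λ' : I → ℂ, flatN Q U Λ' ≠ ⊤ ∧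
          Tendsto (fun n => flatN Q U (Λ n - Λ')) atTop (nhds 0))) ∧
    -- `Y♮(U)`:
    ((∀ lam kap : I → ℂ,
        natN Q U (lam + kap) ≤ Q.C * (natN Q U lam + natN Q U kap)) ∧
     (∀ (c : ℂ) (lam : I → ℂ), natN Q U (c • lam) = (‖c‖₊ : ℝ≥0∞) * natN Q U lam) ∧
     (∀ lam : I → ℂ, natN Q U lam = 0 → lam = 0) ∧
     (∀ lam kap : I → ℂ, (∀ i, ‖lam i‖ ≤ ‖kap i‖) → natN Q U lam ≤ natN Q U kap) ∧
     (∀ lam : I → ℂ, (Function.support lam).Finite → natN Q U lam ≠ ⊤) ∧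
     (∀ Λ : ℕ → I → ℂ, (∀ n, natN Q U (Λ n) ≠ ⊤) →
        Tendsto (fun q : ℕ × ℕ => natN Q U (Λ q.1 - Λ q.2)) atTop (nhds 0) →
        ∃ Λ' : I → ℂ, natN Q U Λ' ≠ ⊤ ∧
          Tendsto (fun n => natN Q U (Λ n - Λ')) atTop (nhds 0))) :=
  sequence_spaces_rich_solid_complete_general hsupp Q hrich U σ hU
end
end

section
/- Let (ψ_x)_{x∈X} be a family in H such that (x,y) ↦ ⟨φ_y, ψ_x⟩ is measurable, and suppose the Gramian kernel G(x,y) = ⟨φ_y, ψ_x⟩ satisfies ess sup_{x∈X} ∫_X |G(x,y)| m_ν(x,y) dμ(y) ≤ A for some A < ∞. Then for μ-a.e. x ∈ X the vector ψ_x belongs to H¹_ν and satisfies ∫_X |⟨ψ_x, φ_y⟩| ν(y) dμ(y) ≤ A · ν(x). -/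
/- Since `m_ν(x,y) ν(x) ≥ ν(y)`, the integrand `|G(x,y)| ν(y)` is dominated by
`|G(x,y)| m_ν(x,y) ν(x)`, and the `ess sup` bound holds at almost every `x`. -/

open MeasureTheory Filter Topology
open scoped ENNReal NNReal

noncomputable section

lemma le_max_div_mul {a b : ℝ} (ha : 0 < a) : b ≤ max (a / b) (b / a) * a :=
  calc b = b / a * a := (div_mul_cancel₀ b ha.ne').symm
    _ ≤ max (a / b) (b / a) * a := by gcongr; exact le_max_right _ _

lemma ENNReal.ofReal_le_ofReal_max_div_mul {a b : ℝ} (ha : 0 < a) :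
    ENNReal.ofReal b ≤ ENNReal.ofReal (max (a / b) (b / a)) * ENNReal.ofReal a := by
  rw [← ENNReal.ofReal_mul' ha.le]
  exact ENNReal.ofReal_le_ofReal (le_max_div_mul ha)

lemma lintegral_mul_weight_le_of_lintegral_mul_max_div_le {α : Type*} [MeasurableSpace α]
    {μ : Measure α} {g : α → ℝ≥0∞} {ν : α → ℝ} {x : α} (hνx : 0 < ν x) {A : ℝ≥0∞}
    (h : ∫⁻ y, g y * ENNReal.ofReal (max (ν x / ν y) (ν y / ν x)) ∂μ ≤ A) :
    ∫⁻ y, g y * ENNReal.ofReal (ν y) ∂μ ≤ A * ENNReal.ofReal (ν x) :=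
  calc ∫⁻ y, g y * ENNReal.ofReal (ν y) ∂μ
      ≤ ∫⁻ y, g y * ENNReal.ofReal (max (ν x / ν y) (ν y / ν x)) * ENNReal.ofReal (ν x) ∂μ :=
        lintegral_mono fun y => by
          rw [mul_assoc]; gcongr; exact ENNReal.ofReal_le_ofReal_max_div_mul hνx
    _ = (∫⁻ y, g y * ENNReal.ofReal (max (ν x / ν y) (ν y / ν x)) ∂μ) * ENNReal.ofReal (ν x) :=
        lintegral_mul_const' _ _ ENNReal.ofReal_ne_top
    _ ≤ A * ENNReal.ofReal (ν x) := by gcongr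

lemma nnnorm_inner_symm {𝕜 E : Type*} [RCLike 𝕜] [NormedAddCommGroup E] [InnerProductSpace 𝕜 E]
    (u v : E) : ‖(inner 𝕜 u v : 𝕜)‖₊ = ‖(inner 𝕜 v u : 𝕜)‖₊ := by
  rw [← inner_conj_symm, RCLike.nnnorm_conj]

/-- The paper's `⟨a, b⟩` is Mathlib's `⟪b, a⟫_ℂ`. -/
theorem gramian_kernel_mem_H1_general
    {X : Type*} [MeasurableSpace X]
    (μ : Measure X)
    {H : Type*} [NormedAddCommGroup H] [InnerProductSpace ℂ H]
    (φ : X → H)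
    (ν : X → ℝ) (hν1 : ∀ x, 1 ≤ ν x)
    (ψ : X → H)
    (A : ℝ≥0∞) (hA : A ≠ ⊤)
    (hbound : essSup (fun x => ∫⁻ y, (‖(inner ℂ (ψ x) (φ y) : ℂ)‖₊ : ℝ≥0∞) *
        ENNReal.ofReal (max (ν x / ν y) (ν y / ν x)) ∂μ) μ ≤ A) :
    ∀ᵐ x ∂μ,
      (∫⁻ y, (‖(inner ℂ (φ y) (ψ x) : ℂ)‖₊ : ℝ≥0∞) * ENNReal.ofReal (ν y) ∂μ) < ⊤ ∧
      (∫⁻ y, (‖(inner ℂ (φ y) (ψ x) : ℂ)‖₊ : ℝ≥0∞) * ENNReal.ofReal (ν y) ∂μ)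
        ≤ A * ENNReal.ofReal (ν x) := by
  filter_upwards [ENNReal.ae_le_essSup (μ := μ) fun x =>
    ∫⁻ y, (‖(inner ℂ (ψ x) (φ y) : ℂ)‖₊ : ℝ≥0∞) *
      ENNReal.ofReal (max (ν x / ν y) (ν y / ν x)) ∂μ] with x hx
  have key := lintegral_mul_weight_le_of_lintegral_mul_max_div_le
    (zero_lt_one.trans_le (hν1 x)) (hx.trans hbound)
  simp only [nnnorm_inner_symm (ψ x)] at key
  exact ⟨key.trans_lt (ENNReal.mul_lt_top hA.lt_top ENNReal.ofReal_lt_top), key⟩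

/-- Let `(ψ_x)` be a family in `H` whose Gramian kernel
`G(x,y) = ⟨φ_y, ψ_x⟩` against a Parseval continuous frame `(φ_x)` is measurable and satisfies
`ess sup_x ∫ |G(x,y)| m_ν(x,y) dμ(y) ≤ A < ∞`.  Then for a.e. `x`, `ψ_x ∈ H¹_ν`, with
`∫ |⟨ψ_x, φ_y⟩| ν(y) dμ(y) ≤ A ν(x)`.
(The paper's inner product `⟨·,·⟩` is linear in the first slot; in Mathlib's convention
`⟨a,b⟩_paper = ⟪b,a⟫_ℂ`.) -/
theorem gramian_kernel_mem_H1
    {X : Type*} [TopologicalSpace X] [MeasurableSpace X] [BorelSpace X]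
    [T2Space X] [LocallyCompactSpace X] [SigmaCompactSpace X]
    (μ : Measure X) [IsFiniteMeasureOnCompacts μ]
    (hsupp : ∀ V : Set X, IsOpen V → V.Nonempty → 0 < μ V)
    {H : Type*} [NormedAddCommGroup H] [InnerProductSpace ℂ H] [CompleteSpace H]
    [TopologicalSpace.SeparableSpace H]
    (φ : X → H)
    (hVmeas : ∀ f : H, Measurable fun x => (inner ℂ (φ x) f : ℂ))
    (hParseval : ∀ f : H,
      ∫⁻ x, (‖(inner ℂ (φ x) f : ℂ)‖₊ : ℝ≥0∞) ^ 2 ∂μ = (‖f‖₊ : ℝ≥0∞) ^ 2)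
    (ν : X → ℝ) (hν1 : ∀ x, 1 ≤ ν x) (hνmeas : Measurable ν)
    (ψ : X → H)
    (hGmeas : Measurable fun q : X × X => (inner ℂ (ψ q.1) (φ q.2) : ℂ))
    (A : ℝ≥0∞) (hA : A ≠ ⊤)
    (hbound : essSup (fun x => ∫⁻ y, (‖(inner ℂ (ψ x) (φ y) : ℂ)‖₊ : ℝ≥0∞) *
        ENNReal.ofReal (max (ν x / ν y) (ν y / ν x)) ∂μ) μ ≤ A) :
    ∀ᵐ x ∂μ,
      (∫⁻ y, (‖(inner ℂ (φ y) (ψ x) : ℂ)‖₊ : ℝ≥0∞) * ENNReal.ofReal (ν y) ∂μ) < ⊤ ∧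
      (∫⁻ y, (‖(inner ℂ (φ y) (ψ x) : ℂ)‖₊ : ℝ≥0∞) * ENNReal.ofReal (ν y) ∂μ)
        ≤ A * ENNReal.ofReal (ν x) :=
  gramian_kernel_mem_H1_general μ φ ν hν1 ψ A hA hbound
end
end

section
/- Assume condition (F). Then: (a) (H¹_ν, ‖·‖_{H¹_ν}) is a Banach space, i.e. every sequence (f_n) in H¹_ν with ‖f_n − f_m‖_{H¹_ν} → 0 as n,m → ∞ converges in ‖·‖_{H¹_ν} to some f ∈ H¹_ν; (b) ‖h‖_H ≤ C_B ‖h‖_{H¹_ν} for every h ∈ H¹_ν, so the inclusion H¹_ν ↪ H is continuous; (c) H¹_ν is dense in H with respect to the Hilbert space norm. -/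
open MeasureTheory Filter Topology
open scoped ENNReal NNReal

noncomputable section

variable {X : Type*} [TopologicalSpace X] [MeasurableSpace X]
variable {H : Type*} [NormedAddCommGroup H] [InnerProductSpace ℂ H]

/-- The `H¹_ν` norm of `f ∈ H` with respect to the frame `φ` and weight `ν`:
`‖f‖_{H¹_ν} = ∫ |⟨f, φ_x⟩| ν(x) dμ(x)` (as an extended real; `f ∈ H¹_ν` iff it is finite).
Here the paper's `⟨f, φ_x⟩` (linear in the first slot) is Mathlib's `⟪φ x, f⟫_ℂ`. -/
def H1enorm (μ : Measure X) (φ : X → H) (ν : X → ℝ) (f : H) : ℝ≥0∞ :=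
  ∫⁻ x, (‖(inner ℂ (φ x) f : ℂ)‖₊ : ℝ≥0∞) * ENNReal.ofReal (ν x) ∂μ

/-- The frame kernel `R(x,y) = ⟨φ_y, φ_x⟩` (paper convention) is `⟪φ x, φ y⟫_ℂ` in Mathlib. -/
def frameKer (φ : X → H) (x y : X) : ℂ := inner ℂ (φ x) (φ y)

/-- The `A_{m_ν}` norm of a complex kernel `K`. -/
def AmNormC (μ : Measure X) (ν : X → ℝ) (K : X → X → ℂ) : ℝ≥0∞ :=
  max
    (essSup (fun x => ∫⁻ y, (‖K x y‖₊ : ℝ≥0∞) *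
      ENNReal.ofReal (max (ν x / ν y) (ν y / ν x)) ∂μ) μ)
    (essSup (fun y => ∫⁻ x, (‖K x y‖₊ : ℝ≥0∞) *
      ENNReal.ofReal (max (ν x / ν y) (ν y / ν x)) ∂μ) μ)

/-- `ℓ : H → ℂ` is a bounded conjugate-linear functional on `H¹_ν`. -/
def IsBCF (μ : Measure X) (φ : X → H) (ν : X → ℝ) (L : H → ℂ) : Prop :=
  (∀ g h : H, H1enorm μ φ ν g ≠ ⊤ → H1enorm μ φ ν h ≠ ⊤ → L (g + h) = L g + L h) ∧
  (∀ (a : ℂ) (h : H), H1enorm μ φ ν h ≠ ⊤ → L (a • h) = (starRingEnd ℂ) a * L h) ∧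
  (∃ C : ℝ≥0∞, C ≠ ⊤ ∧ ∀ h : H, H1enorm μ φ ν h ≠ ⊤ →
    (‖L h‖₊ : ℝ≥0∞) ≤ C * H1enorm μ φ ν h)

/-!
By Parseval and `|⟨h, φ_x⟩| ≤ C_B ν(x) ‖h‖`,
`‖h‖² = ∫ |⟨h, φ_x⟩|² dμ ≤ C_B ‖h‖ ∫ |⟨h, φ_x⟩| ν(x) dμ`, which is the embedding (b).
For (a), an `H¹_ν`-Cauchy sequence is then Cauchy in `H`; its limit `g` in `H` is also its
`H¹_ν`-limit, by Fatou's lemma applied to the pointwise convergence of the voice transforms.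
For (c), `H¹_ν` is a subspace containing every `φ_x`, and Parseval forces a vector orthogonal
to all `φ_x` to vanish.
-/

lemma ENNReal.tendsto_atTop_zero_of_le_liminf {a : ℕ × ℕ → ℝ≥0∞} {b : ℕ → ℝ≥0∞}
    (ha : Tendsto a atTop (𝓝 0)) (hb : ∀ m, b m ≤ liminf (fun n => a (m, n)) atTop) :
    Tendsto b atTop (𝓝 0) := by
  rw [ENNReal.tendsto_atTop_zero] at ha ⊢
  intro ε hε
  obtain ⟨N, hN⟩ := ha ε hε
  refine ⟨max N.1 N.2, fun m hm => (hb m).trans (liminf_le_of_frequently_le ?_)⟩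
  refine (eventually_atTop.2 ⟨max N.1 N.2, fun n hn => hN (m, n) ?_⟩).frequently
  exact ⟨(le_max_left _ _).trans hm, (le_max_right _ _).trans hn⟩

lemma cauchySeq_of_tendsto_sub {E : Type*} [SeminormedAddCommGroup E] {p : E → ℝ≥0∞}
    {C : ℝ≥0∞} (hC : C ≠ ⊤) (hp : ∀ h, (‖h‖₊ : ℝ≥0∞) ≤ C * p h) {f : ℕ → E}
    (hf : Tendsto (fun q : ℕ × ℕ => p (f q.1 - f q.2)) atTop (𝓝 0)) : CauchySeq f := by
  have hnorm : Tendsto (fun q : ℕ × ℕ => (‖f q.1 - f q.2‖₊ : ℝ≥0∞)) atTop (𝓝 0) := by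
    have hCp := ENNReal.Tendsto.const_mul hf (Or.inr hC)
    rw [mul_zero] at hCp
    exact tendsto_of_tendsto_of_tendsto_of_le_of_le tendsto_const_nhds hCp
      (fun _ => zero_le) fun _ => hp _
  rw [cauchySeq_iff_tendsto_dist_atTop_0]
  simpa [Function.comp_def, dist_eq_norm] using
    (ENNReal.tendsto_toReal ENNReal.zero_ne_top).comp hnorm

section H1nu

variable {X : Type*} {φ : X → H} {ν : X → ℝ}

lemma nnnorm_inner_le_ofReal_mul {CB : ℝ} (hν : ∀ x, 0 ≤ ν x)
    (hφ : ∀ x, ‖φ x‖ ≤ CB * ν x) (x : X) (h : H) :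
    (‖(inner ℂ (φ x) h : ℂ)‖₊ : ℝ≥0∞) ≤ ENNReal.ofReal CB * ENNReal.ofReal (ν x) * ‖h‖₊ := by
  have hle : ‖(inner ℂ (φ x) h : ℂ)‖ ≤ CB * ν x * ‖h‖ :=
    (norm_inner_le_norm _ _).trans (by gcongr; exact hφ x)
  rw [← ENNReal.ofReal_mul' (hν x), ← enorm_eq_nnnorm, ← enorm_eq_nnnorm, ← ofReal_norm,
    ← ofReal_norm, ← ENNReal.ofReal_mul' (norm_nonneg h)]
  exact ENNReal.ofReal_le_ofReal hle

variable [MeasurableSpace X] {μ : Measure X}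

lemma measurable_H1integrand (hV : ∀ f : H, Measurable fun x => (inner ℂ (φ x) f : ℂ))
    (hν : Measurable ν) (f : H) :
    Measurable fun x => (‖(inner ℂ (φ x) f : ℂ)‖₊ : ℝ≥0∞) * ENNReal.ofReal (ν x) :=
  (hV f).nnnorm.coe_nnreal_ennreal.mul (ENNReal.measurable_ofReal.comp hν)

@[simp]
lemma H1enorm_zero : H1enorm μ φ ν 0 = 0 := by
  simp [H1enorm]

@[simp]
lemma H1enorm_neg (f : H) : H1enorm μ φ ν (-f) = H1enorm μ φ ν f := by
  simp [H1enorm, inner_neg_right]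

lemma H1enorm_smul (a : ℂ) (f : H) :
    H1enorm μ φ ν (a • f) = (‖a‖₊ : ℝ≥0∞) * H1enorm μ φ ν f := by
  simp only [H1enorm, inner_smul_right, nnnorm_mul, ENNReal.coe_mul, mul_assoc]
  exact lintegral_const_mul' _ _ ENNReal.coe_ne_top

lemma H1enorm_add_le (hV : ∀ f : H, Measurable fun x => (inner ℂ (φ x) f : ℂ))
    (hν : Measurable ν) (f g : H) :
    H1enorm μ φ ν (f + g) ≤ H1enorm μ φ ν f + H1enorm μ φ ν g := by
  rw [H1enorm, H1enorm, H1enorm, ← lintegral_add_left (measurable_H1integrand hV hν f)]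
  gcongr with x
  rw [inner_add_right, ← add_mul]
  gcongr
  exact_mod_cast nnnorm_add_le _ _

lemma H1enorm_sub_le (hV : ∀ f : H, Measurable fun x => (inner ℂ (φ x) f : ℂ))
    (hν : Measurable ν) (f g : H) :
    H1enorm μ φ ν (f - g) ≤ H1enorm μ φ ν f + H1enorm μ φ ν g := by
  simpa [sub_eq_add_neg] using H1enorm_add_le hV hν f (-g)

lemma H1enorm_ne_top_of_mem_span (hV : ∀ f : H, Measurable fun x => (inner ℂ (φ x) f : ℂ))
    (hν : Measurable ν) (hφ : ∀ x, H1enorm μ φ ν (φ x) ≠ ⊤) {f : H}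
    (hf : f ∈ Submodule.span ℂ (Set.range φ)) : H1enorm μ φ ν f ≠ ⊤ := by
  induction hf using Submodule.span_induction with
  | mem _ hx => obtain ⟨x, rfl⟩ := hx; exact hφ x
  | zero => simp
  | add f g _ _ hf hg =>
    exact ne_top_of_le_ne_top (ENNReal.add_ne_top.2 ⟨hf, hg⟩) (H1enorm_add_le hV hν f g)
  | smul a f _ hf =>
    rw [H1enorm_smul]
    exact ENNReal.mul_ne_top ENNReal.coe_ne_top hf

lemma dense_span_range_of_parseval [CompleteSpace H]
    (hParseval : ∀ f : H,
      ∫⁻ x, (‖(inner ℂ (φ x) f : ℂ)‖₊ : ℝ≥0∞) ^ 2 ∂μ = (‖f‖₊ : ℝ≥0∞) ^ 2) :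
    Dense (Submodule.span ℂ (Set.range φ) : Set H) := by
  rw [Submodule.dense_iff_topologicalClosure_eq_top, Submodule.topologicalClosure_eq_top_iff,
    Submodule.eq_bot_iff]
  intro v hv
  have hVv : ∀ x, (inner ℂ (φ x) v : ℂ) = 0 := fun x =>
    (Submodule.mem_orthogonal _ _).1 hv (φ x) (Submodule.subset_span ⟨x, rfl⟩)
  have : (‖v‖₊ : ℝ≥0∞) ^ 2 = 0 := by
    simp [← hParseval v, hVv]
  simpa using this

lemma nnnorm_le_ofReal_mul_H1enorm
    (hParseval : ∀ f : H,
      ∫⁻ x, (‖(inner ℂ (φ x) f : ℂ)‖₊ : ℝ≥0∞) ^ 2 ∂μ = (‖f‖₊ : ℝ≥0∞) ^ 2)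
    {CB : ℝ} (hν : ∀ x, 0 ≤ ν x) (hφ : ∀ x, ‖φ x‖ ≤ CB * ν x) (h : H) :
    (‖h‖₊ : ℝ≥0∞) ≤ ENNReal.ofReal CB * H1enorm μ φ ν h := by
  rcases eq_or_ne (‖h‖₊ : ℝ≥0∞) 0 with h0 | h0
  · simp [h0]
  refine (ENNReal.mul_le_mul_iff_left h0 ENNReal.coe_ne_top).mp ?_
  calc (‖h‖₊ : ℝ≥0∞) * ‖h‖₊
      = ∫⁻ x, (‖(inner ℂ (φ x) h : ℂ)‖₊ : ℝ≥0∞) * ‖(inner ℂ (φ x) h : ℂ)‖₊ ∂μ := by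
        simp only [← sq, hParseval]
    _ ≤ ∫⁻ x, (ENNReal.ofReal CB * ‖h‖₊) *
          ((‖(inner ℂ (φ x) h : ℂ)‖₊ : ℝ≥0∞) * ENNReal.ofReal (ν x)) ∂μ := by
        refine lintegral_mono fun x =>
          (mul_le_mul_left (nnnorm_inner_le_ofReal_mul hν hφ x h) _).trans_eq ?_
        ring
    _ = ENNReal.ofReal CB * H1enorm μ φ ν h * ‖h‖₊ := by
        rw [H1enorm, lintegral_const_mul' _ _ (ENNReal.mul_ne_top ENNReal.ofReal_ne_top
          ENNReal.coe_ne_top)]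
        ring

lemma H1enorm_sub_le_liminf (hV : ∀ f : H, Measurable fun x => (inner ℂ (φ x) f : ℂ))
    (hν : Measurable ν) {f : ℕ → H} {g : H} (hfg : Tendsto f atTop (𝓝 g)) (h : H) :
    H1enorm μ φ ν (h - g) ≤ liminf (fun n => H1enorm μ φ ν (h - f n)) atTop := by
  have hpt : ∀ x, Tendsto (fun n => (‖(inner ℂ (φ x) (h - f n) : ℂ)‖₊ : ℝ≥0∞) *
      ENNReal.ofReal (ν x)) atTop
        (𝓝 ((‖(inner ℂ (φ x) (h - g) : ℂ)‖₊ : ℝ≥0∞) * ENNReal.ofReal (ν x))) := fun x =>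
    ENNReal.Tendsto.mul_const (ENNReal.tendsto_coe.2
      (tendsto_const_nhds.inner (tendsto_const_nhds.sub hfg)).nnnorm)
      (Or.inr ENNReal.ofReal_ne_top)
  calc H1enorm μ φ ν (h - g)
      = ∫⁻ x, liminf (fun n => (‖(inner ℂ (φ x) (h - f n) : ℂ)‖₊ : ℝ≥0∞) *
          ENNReal.ofReal (ν x)) atTop ∂μ :=
        lintegral_congr fun x => (hpt x).liminf_eq.symm
    _ ≤ liminf (fun n => H1enorm μ φ ν (h - f n)) atTop :=
        lintegral_liminf_le fun n => measurable_H1integrand hV hν (h - f n)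

end H1nu

theorem H1nu_banach_embed_dense_general
    [CompleteSpace H]
    (μ : Measure X)
    (φ : X → H)
    (hVmeas : ∀ f : H, Measurable fun x => (inner ℂ (φ x) f : ℂ))
    (hParseval : ∀ f : H,
      ∫⁻ x, (‖(inner ℂ (φ x) f : ℂ)‖₊ : ℝ≥0∞) ^ 2 ∂μ = (‖f‖₊ : ℝ≥0∞) ^ 2)
    (ν : X → ℝ) (hν1 : ∀ x, 1 ≤ ν x) (hνmeas : Measurable ν)
    (CB : ℝ) (hφbd : ∀ x, ‖φ x‖ ≤ CB * ν x)
    (hφH1 : ∀ x, H1enorm μ φ ν (φ x) ≠ ⊤) :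
    -- (a) completeness of `H¹_ν`
    (∀ f : ℕ → H, (∀ n, H1enorm μ φ ν (f n) ≠ ⊤) →
      Tendsto (fun q : ℕ × ℕ => H1enorm μ φ ν (f q.1 - f q.2)) atTop (nhds 0) →
      ∃ g : H, H1enorm μ φ ν g ≠ ⊤ ∧
        Tendsto (fun n => H1enorm μ φ ν (f n - g)) atTop (nhds 0)) ∧
    -- (b) continuity of the embedding `H¹_ν ↪ H`
    (∀ h : H, H1enorm μ φ ν h ≠ ⊤ →
      (‖h‖₊ : ℝ≥0∞) ≤ ENNReal.ofReal CB * H1enorm μ φ ν h) ∧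
    -- (c) density of `H¹_ν` in `H`
    Dense {h : H | H1enorm μ φ ν h ≠ ⊤} := by
  have embed := nnnorm_le_ofReal_mul_H1enorm hParseval (fun x => zero_le_one.trans (hν1 x)) hφbd
  refine ⟨fun f hf hcauchy => ?_, fun h _ => embed h, ?_⟩
  · obtain ⟨g, hfg⟩ := cauchySeq_tendsto_of_complete
      (cauchySeq_of_tendsto_sub ENNReal.ofReal_ne_top embed hcauchy)
    have hlim : Tendsto (fun m => H1enorm μ φ ν (f m - g)) atTop (𝓝 0) :=
      ENNReal.tendsto_atTop_zero_of_le_liminf hcauchy fun m =>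
        H1enorm_sub_le_liminf hVmeas hνmeas hfg (f m)
    obtain ⟨m, hm⟩ := (hlim.eventually_lt_const ENNReal.zero_lt_top).exists
    refine ⟨g, ne_top_of_le_ne_top (ENNReal.add_ne_top.2 ⟨hf m, hm.ne⟩) ?_, hlim⟩
    simpa using H1enorm_sub_le hVmeas hνmeas (f m) (f m - g)
  · exact (dense_span_range_of_parseval hParseval).mono fun h =>
      H1enorm_ne_top_of_mem_span hVmeas hνmeas hφH1

/-- Under condition (F): (a) `H¹_ν` is complete (a Banach space);
(b) `‖h‖_H ≤ C_B ‖h‖_{H¹_ν}`, so `H¹_ν ↪ H` continuously; (c) `H¹_ν` is dense in `H`. -/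
theorem H1nu_banach_embed_dense
    [BorelSpace X] [T2Space X] [LocallyCompactSpace X] [SigmaCompactSpace X]
    [CompleteSpace H] [TopologicalSpace.SeparableSpace H]
    (μ : Measure X) [IsFiniteMeasureOnCompacts μ]
    (hsupp : ∀ V : Set X, IsOpen V → V.Nonempty → 0 < μ V)
    (φ : X → H)
    (hVmeas : ∀ f : H, Measurable fun x => (inner ℂ (φ x) f : ℂ))
    (hParseval : ∀ f : H,
      ∫⁻ x, (‖(inner ℂ (φ x) f : ℂ)‖₊ : ℝ≥0∞) ^ 2 ∂μ = (‖f‖₊ : ℝ≥0∞) ^ 2)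
    (ν : X → ℝ) (hν1 : ∀ x, 1 ≤ ν x) (hνmeas : Measurable ν)
    (CB : ℝ) (hCB : 0 < CB) (hφbd : ∀ x, ‖φ x‖ ≤ CB * ν x)
    (hRAm : AmNormC μ ν (frameKer φ) ≠ ⊤)
    (hφH1 : ∀ x, H1enorm μ φ ν (φ x) ≠ ⊤) :
    -- (a) completeness of `H¹_ν`
    (∀ f : ℕ → H, (∀ n, H1enorm μ φ ν (f n) ≠ ⊤) →
      Tendsto (fun q : ℕ × ℕ => H1enorm μ φ ν (f q.1 - f q.2)) atTop (nhds 0) →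
      ∃ g : H, H1enorm μ φ ν g ≠ ⊤ ∧
        Tendsto (fun n => H1enorm μ φ ν (f n - g)) atTop (nhds 0)) ∧
    -- (b) continuity of the embedding `H¹_ν ↪ H`
    (∀ h : H, H1enorm μ φ ν h ≠ ⊤ →
      (‖h‖₊ : ℝ≥0∞) ≤ ENNReal.ofReal CB * H1enorm μ φ ν h) ∧
    -- (c) density of `H¹_ν` in `H`
    Dense {h : H | H1enorm μ φ ν h ≠ ⊤} :=
  H1nu_banach_embed_dense_general μ φ hVmeas hParseval ν hν1 hνmeas CB hφbd hφH1
end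
end
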